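/- For any ω ∈ Q_1^-Λ^k on the cube T = [−1,1]^n and any μ ∈ Q_1^{*,-}Λ^{k+1}, the adjoint projection I_T^{d^k} ω onto Whitney forms satisfies ⟨d^k I_T^{d^k} ω, μ⟩_{L^2Λ^{k+1}(T)} − ⟨I_T^{d^k} ω, δ_{k+1} μ⟩_{L^2Λ^k(T)} = ⟨d^k ω, μ⟩_{L^2Λ^{k+1}(T)} − ⟨ω, δ_{k+1} μ⟩_{L^2Λ^k(T)}; that is, the defining adjoint identity of I_T^{d^k} (stated for test forms in P_1^{*,-}Λ^{k+1}) extends to all test forms in the larger space Q_1^{*,-}Λ^{k+1}. -/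

import Mathlib

open MvPolynomial Finset MeasureTheory

/-- Strictly increasing `k`-indices in `{1,…,n}`, modelled as `k`-element subsets of `Fin n`. -/
abbrev Idx (n k : ℕ) := {s : Finset (Fin n) // s.card = k}

/-- A differential `k`-form with polynomial coefficients on `ℝⁿ`:
one polynomial coefficient for each increasing `k`-index. -/
abbrev Form (n k : ℕ) := Idx n k → MvPolynomial (Fin n) ℝ

/-- The sign `(-1)^{#\{j ∈ s : j < i\}}`. -/
noncomputable def sgn {n : ℕ} (s : Finset (Fin n)) (i : Fin n) : ℝ :=
  (-1) ^ (s.filter (· < i)).card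

def eraseIdx {n k : ℕ} (s : Idx n (k+1)) {i : Fin n} (hi : i ∈ s.1) : Idx n k :=
  ⟨s.1.erase i, by simp [Finset.card_erase_of_mem hi, s.2]⟩

def insertIdx {n k : ℕ} (s : Idx n k) {i : Fin n} (hi : i ∉ s.1) : Idx n (k+1) :=
  ⟨insert i s.1, by simp [Finset.card_insert_of_notMem hi, s.2]⟩

/-- The exterior derivative `d^k`. -/
noncomputable def extd (n k : ℕ) : Form n k →ₗ[ℝ] Form n (k+1) where
  toFun ω := fun s => ∑ i ∈ s.1.attach, sgn s.1 i.1 • pderiv i.1 (ω (eraseIdx s i.2))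
  map_add' ω η := by
    funext s
    simp [Finset.sum_add_distrib, smul_add]
  map_smul' c ω := by
    funext s
    simp only [Pi.smul_apply, RingHom.id_apply]
    rw [Finset.smul_sum]
    exact Finset.sum_congr rfl (fun i _ => by rw [(pderiv i.1).map_smul, smul_comm])

/-- The Koszul operator `κ` (contraction with the position vector field). -/
noncomputable def koszul (n k : ℕ) : Form n (k+1) →ₗ[ℝ] Form n k where
  toFun ω := fun s =>
    ∑ i ∈ (s.1ᶜ).attach, sgn s.1 i.1 • (X i.1 * ω (insertIdx s (Finset.mem_compl.mp i.2)))
  map_add' ω η := by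
    funext s
    simp [Finset.sum_add_distrib, mul_add, smul_add]
  map_smul' c ω := by
    funext s
    simp only [Pi.smul_apply, RingHom.id_apply, mul_smul_comm]
    rw [Finset.smul_sum]
    exact Finset.sum_congr rfl (fun i _ => (smul_comm _ _ _))

/-- The codifferential `δ_{k+1}` (the formal adjoint of `d^k` on Euclidean `ℝⁿ`,
which coincides with `(-1)^{(k+1)n} ⋆ d^{n-k-1} ⋆`). -/
noncomputable def codiff (n k : ℕ) : Form n (k+1) →ₗ[ℝ] Form n k where
  toFun ω := fun s =>
    -∑ i ∈ (s.1ᶜ).attach, sgn s.1 i.1 • pderiv i.1 (ω (insertIdx s (Finset.mem_compl.mp i.2)))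
  map_add' ω η := by
    funext s
    simp [Finset.sum_add_distrib, smul_add]
    ring
  map_smul' c ω := by
    funext s
    simp only [Pi.smul_apply, RingHom.id_apply, smul_neg, neg_inj]
    rw [Finset.smul_sum]
    exact Finset.sum_congr rfl (fun i _ => by rw [(pderiv i.1).map_smul, smul_comm])

/-- The operator `κ^δ = ⋆ ∘ κ ∘ ⋆` (exterior multiplication by `Σ xᵢ dxⁱ`, up to sign). -/
noncomputable def kappaDelta (n k : ℕ) : Form n k →ₗ[ℝ] Form n (k+1) where
  toFun ω := fun s => ∑ i ∈ s.1.attach, sgn s.1 i.1 • (X i.1 * ω (eraseIdx s i.2))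
  map_add' ω η := by
    funext s
    simp [Finset.sum_add_distrib, mul_add, smul_add]
  map_smul' c ω := by
    funext s
    simp only [Pi.smul_apply, RingHom.id_apply, mul_smul_comm]
    rw [Finset.smul_sum]
    exact Finset.sum_congr rfl (fun i _ => (smul_comm _ _ _))

/-- Sign of the permutation `(t, tᶜ) ↦ (1,…,n)`, i.e. `⋆ dx^t = starSign t · dx^{tᶜ}`. -/
noncomputable def starSign {n : ℕ} (t : Finset (Fin n)) : ℝ :=
  (-1) ^ (∑ i ∈ t, ((tᶜ).filter (· < i)).card)

/-- The Hodge star operator on `k`-forms on `ℝⁿ`, `k + l = n`. -/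
noncomputable def hodge (n k l : ℕ) (h : k + l = n) : Form n k →ₗ[ℝ] Form n l where
  toFun ω := fun s => starSign (s.1ᶜ) •
    ω ⟨s.1ᶜ, by rw [Finset.card_compl, s.2, Fintype.card_fin]; omega⟩
  map_add' ω η := by funext s; simp [smul_add]
  map_smul' c ω := by funext s; simp only [Pi.smul_apply, RingHom.id_apply]; rw [smul_comm]

/-- The monomial form `x_τ dx^σ`. -/
noncomputable def monForm (n k : ℕ) (τ : Finset (Fin n)) (σ : Idx n k) : Form n k :=
  fun s => if s = σ then ∏ i ∈ τ, X i else 0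

/-- `Q_1^-Λ^k = span{ x_τ dx^σ : |σ| = k, 0 ≤ |τ| ≤ n-k, τ ⊆ σᶜ }`. -/
noncomputable def Qm (n k : ℕ) : Submodule ℝ (Form n k) :=
  Submodule.span ℝ
    {ω | ∃ (τ : Finset (Fin n)) (σ : Idx n k), τ.card ≤ n - k ∧ τ ⊆ (σ.1)ᶜ ∧ ω = monForm n k τ σ}

/-- `Q_1^{*,-}Λ^k = span{ x_τ' dx^σ' : |σ'| = k, 0 ≤ |τ'| ≤ k, τ' ⊆ σ' }`. -/
noncomputable def Qs (n k : ℕ) : Submodule ℝ (Form n k) :=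
  Submodule.span ℝ
    {ω | ∃ (τ : Finset (Fin n)) (σ : Idx n k), τ.card ≤ k ∧ τ ⊆ σ.1 ∧ ω = monForm n k τ σ}

/-- `P_0Λ^k`: forms with constant coefficients. -/
noncomputable def P0 (n k : ℕ) : Submodule ℝ (Form n k) :=
  Submodule.span ℝ {ω | ∃ σ : Idx n k, ω = monForm n k ∅ σ}

/-- The Whitney space `P_1^-Λ^k = P_0Λ^k + κ(P_0Λ^{k+1})`. -/
noncomputable def Pm (n k : ℕ) : Submodule ℝ (Form n k) :=
  P0 n k ⊔ Submodule.map (koszul n k) (P0 n (k+1))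

/-- The star Whitney space `P_1^{*,-}Λ^{k+1} = P_0Λ^{k+1} + κ^δ(P_0Λ^k)`. -/
noncomputable def PsS (n k : ℕ) : Submodule ℝ (Form n (k+1)) :=
  P0 n (k+1) ⊔ Submodule.map (kappaDelta n k) (P0 n k)

/-- `L²` inner product of `k`-forms on the centered box `[-r, r]`. -/
noncomputable def binner (n k : ℕ) (r : Fin n → ℝ) (ω η : Form n k) : ℝ :=
  ∑ s : Idx n k, ∫ x in Set.Icc (fun i => -(r i)) r, eval x (ω s * η s)

/-- `L²` inner product of `k`-forms on the reference cube `T = [-1,1]ⁿ`. -/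
noncomputable def finner (n k : ℕ) (ω η : Form n k) : ℝ :=
  binner n k (fun _ => (1 : ℝ)) ω η

/-!
Write `B ν μ = ⟨dν, μ⟩ - ⟨ν, δμ⟩`. Since Whitney forms lie in `Q_1^-Λ^k`, `I ω - ω ∈ Q_1^-Λ^k`,
and it suffices to show that every `μ ∈ Q_1^{*,-}Λ^{k+1}` lies in `P_1^{*,-}Λ^{k+1}` modulo forms
that are `B`-orthogonal to all of `Q_1^-Λ^k`.

On the symmetric cube `∫ x_a x_b = 0` unless `a = b`, by parity in a variable of `a ∆ b`. A
generator `x_a dx^σ` of `Q^-` has `a ∩ σ = ∅` and one `x_b dx^σ` of `Q^{*,-}` has `b ⊆ σ`, so they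
are orthogonal unless `a = b = ∅`. As `d` preserves `Q^-`, for `μ = x_τ dx^σ` with `τ ≠ ∅` only
`⟨ν, δμ⟩` survives, and `δμ` is a combination of the `x_{τ∖i} dx^{σ∖i}`, `i ∈ τ`. So `B(·, μ) = 0`
when `|τ| ≥ 2`, while `B(·, x_m dx^σ) = ±⟨·, dx^{σ∖m}⟩`, which is `±1/(n-k)` times
`B(·, κ^δ dx^{σ∖m})`.
-/

theorem setIntegral_Icc_prod_eq_prod {ι : Type*} [Fintype ι] (a b : ι → ℝ) (f : ι → ℝ → ℝ) :
    ∫ x in Set.Icc a b, ∏ i, f i (x i) = ∏ i, ∫ t in Set.Icc (a i) (b i), f i t := by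
  rw [← Set.pi_univ_Icc, volume_pi, Measure.restrict_pi_pi, integral_fintype_prod_eq_prod]

theorem setIntegral_Icc_neg_one_one_id : ∫ t in Set.Icc (-1 : ℝ) 1, t = 0 := by
  rw [integral_Icc_eq_integral_Ioc, ← intervalIntegral.integral_of_le (by norm_num), integral_id]
  norm_num

theorem mem_and_erase_eq_iff {α : Type*} [DecidableEq α] {s r : Finset α} {i : α} :
    i ∈ s ∧ s.erase i = r ↔ i ∉ r ∧ insert i r = s := by
  constructor
  · rintro ⟨hi, rfl⟩
    exact ⟨Finset.notMem_erase i s, Finset.insert_erase hi⟩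
  · rintro ⟨hi, rfl⟩
    exact ⟨Finset.mem_insert_self i r, Finset.erase_insert hi⟩

section CubeForms

variable {n k : ℕ}

noncomputable def cubeIntegral (n : ℕ) : MvPolynomial (Fin n) ℝ →ₗ[ℝ] ℝ where
  toFun p := ∫ x in Set.Icc (fun _ => -1) (fun _ => 1), eval x p
  map_add' p q := by
    simp only [map_add]
    exact integral_add (continuous_eval p).integrableOn_Icc (continuous_eval q).integrableOn_Icc
  map_smul' c p := by simp [integral_const_mul]

noncomputable def mon (n : ℕ) (t : Finset (Fin n)) : MvPolynomial (Fin n) ℝ := ∏ i ∈ t, X i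

theorem cubeIntegral_mon_mul_mon_of_ne {a b : Finset (Fin n)} (hab : a ≠ b) :
    cubeIntegral n (mon n a * mon n b) = 0 := by
  obtain ⟨j, hj⟩ : ∃ j, ¬(j ∈ a ↔ j ∈ b) := by
    by_contra! h
    exact hab (Finset.ext h)
  let f : Fin n → ℝ → ℝ := fun i t => (if i ∈ a then t else 1) * (if i ∈ b then t else 1)
  have heval : ∀ x : Fin n → ℝ, eval x (mon n a * mon n b) = ∏ i, f i (x i) := by
    intro x
    simp only [f, mon, map_mul, map_prod, eval_X, Finset.prod_mul_distrib, Finset.prod_ite_mem,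
      Finset.univ_inter]
  change ∫ x in _, _ = 0
  simp_rw [heval]
  rw [setIntegral_Icc_prod_eq_prod]
  refine Finset.prod_eq_zero (Finset.mem_univ j) ?_
  by_cases hja : j ∈ a <;> simp_all [f, setIntegral_Icc_neg_one_one_id]

theorem pderiv_mon_of_notMem {i : Fin n} {t : Finset (Fin n)} (hi : i ∉ t) :
    pderiv i (mon n t) = 0 := by
  refine pderiv_eq_zero_of_notMem_vars fun hvars => ?_
  obtain ⟨j, hj, hij⟩ := Finset.mem_biUnion.mp (vars_prod _ hvars)
  rw [vars_X, Finset.mem_singleton] at hij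
  exact hi (hij ▸ hj)

theorem pderiv_mon (i : Fin n) (t : Finset (Fin n)) :
    pderiv i (mon n t) = if i ∈ t then mon n (t.erase i) else 0 := by
  split_ifs with hi
  · rw [mon, ← Finset.mul_prod_erase t _ hi, pderiv_mul, pderiv_X_self, ← mon,
      pderiv_mon_of_notMem (Finset.notMem_erase i t)]
    ring
  · exact pderiv_mon_of_notMem hi

theorem monForm_apply (τ : Finset (Fin n)) (σ s : Idx n k) :
    monForm n k τ σ s = if s = σ then mon n τ else 0 := rfl

theorem monForm_eq_single (τ : Finset (Fin n)) (σ : Idx n k) :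
    monForm n k τ σ = Pi.single σ (mon n τ) := by
  funext s
  simp [monForm, Pi.single_apply, mon]

@[simp]
theorem coe_eraseIdx (s : Idx n (k+1)) {i : Fin n} (hi : i ∈ s.1) :
    (eraseIdx s hi).1 = s.1.erase i := rfl

@[simp]
theorem coe_insertIdx (s : Idx n k) {i : Fin n} (hi : i ∉ s.1) :
    (insertIdx s hi).1 = insert i s.1 := rfl

theorem sgn_erase_self (s : Finset (Fin n)) (i : Fin n) : sgn (s.erase i) i = sgn s i := by
  unfold sgn
  rw [Finset.filter_erase, Finset.erase_eq_of_notMem (by simp)]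

theorem sgn_mul_self (s : Finset (Fin n)) (i : Fin n) : sgn s i * sgn s i = 1 := by
  rw [sgn, ← pow_add, Even.neg_one_pow ⟨_, rfl⟩]

section Sums

variable (D : Fin n → MvPolynomial (Fin n) ℝ → MvPolynomial (Fin n) ℝ)

/-- `∑ᵢ dxⁱ ∧ Dᵢ ν` -/
noncomputable def wedgeSum (ν : Form n k) : Form n (k+1) :=
  fun s => ∑ i ∈ s.1.attach, sgn s.1 i.1 • D i.1 (ν (eraseIdx s i.2))

/-- `∑ᵢ ι_{eᵢ} Dᵢ ν` -/
noncomputable def interiorSum (ν : Form n (k+1)) : Form n k :=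
  fun s => ∑ i ∈ (s.1ᶜ).attach, sgn s.1 i.1 • D i.1 (ν (insertIdx s (Finset.mem_compl.mp i.2)))

variable {D}

theorem wedgeSum_single (hD : ∀ i, D i 0 = 0) (ρ : Idx n k) (p : MvPolynomial (Fin n) ℝ) :
    wedgeSum D (Pi.single ρ p : Form n k)
      = ∑ i ∈ (ρ.1ᶜ).attach, sgn (insert i.1 ρ.1) i.1 •
          (Pi.single (insertIdx ρ (Finset.mem_compl.mp i.2)) (D i.1 p) : Form n (k+1)) := by
  funext s
  have hl : ∀ i ∈ s.1.attach, sgn s.1 i.1 • D i.1 ((Pi.single ρ p : Form n k) (eraseIdx s i.2))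
      = if s.1.erase i.1 = ρ.1 then sgn s.1 i.1 • D i.1 p else 0 := by
    intro i _
    simp only [Pi.single_apply, Subtype.ext_iff, coe_eraseIdx]
    split_ifs
    · rfl
    · rw [hD, smul_zero]
  have hr : ∀ i ∈ (ρ.1ᶜ).attach, (sgn (insert i.1 ρ.1) i.1 •
      (Pi.single (insertIdx ρ (Finset.mem_compl.mp i.2)) (D i.1 p) : Form n (k+1))) s
      = if s.1 = insert i.1 ρ.1 then sgn s.1 i.1 • D i.1 p else 0 := by
    intro i _
    simp only [Pi.smul_apply, Pi.single_apply, Subtype.ext_iff, coe_insertIdx]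
    split_ifs with h
    · rw [h]
    · rw [smul_zero]
  rw [wedgeSum, Finset.sum_apply, Finset.sum_congr rfl hl, Finset.sum_congr rfl hr,
    Finset.sum_attach s.1 (fun i => if s.1.erase i = ρ.1 then sgn s.1 i • D i p else 0),
    Finset.sum_attach (ρ.1ᶜ) (fun i => if s.1 = insert i ρ.1 then sgn s.1 i • D i p else 0),
    ← Finset.sum_filter, ← Finset.sum_filter]
  congr 1
  ext i
  simp only [Finset.mem_filter, Finset.mem_compl, mem_and_erase_eq_iff, eq_comm (a := s.1)]

theorem interiorSum_single (hD : ∀ i, D i 0 = 0) (σ : Idx n (k+1)) (p : MvPolynomial (Fin n) ℝ) :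
    interiorSum D (Pi.single σ p : Form n (k+1))
      = ∑ i ∈ σ.1.attach, sgn (σ.1.erase i.1) i.1 •
          (Pi.single (eraseIdx σ i.2) (D i.1 p) : Form n k) := by
  funext s
  have hl : ∀ i ∈ (s.1ᶜ).attach,
      sgn s.1 i.1 • D i.1 ((Pi.single σ p : Form n (k+1)) (insertIdx s (Finset.mem_compl.mp i.2)))
      = if insert i.1 s.1 = σ.1 then sgn s.1 i.1 • D i.1 p else 0 := by
    intro i _
    simp only [Pi.single_apply, Subtype.ext_iff, coe_insertIdx]
    split_ifs
    · rfl
    · rw [hD, smul_zero]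
  have hr : ∀ i ∈ σ.1.attach, (sgn (σ.1.erase i.1) i.1 •
      (Pi.single (eraseIdx σ i.2) (D i.1 p) : Form n k)) s
      = if s.1 = σ.1.erase i.1 then sgn s.1 i.1 • D i.1 p else 0 := by
    intro i _
    simp only [Pi.smul_apply, Pi.single_apply, Subtype.ext_iff, coe_eraseIdx]
    split_ifs with h
    · rw [h]
    · rw [smul_zero]
  rw [interiorSum, Finset.sum_apply, Finset.sum_congr rfl hl, Finset.sum_congr rfl hr,
    Finset.sum_attach (s.1ᶜ) (fun i => if insert i s.1 = σ.1 then sgn s.1 i • D i p else 0),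
    Finset.sum_attach σ.1 (fun i => if s.1 = σ.1.erase i then sgn s.1 i • D i p else 0),
    ← Finset.sum_filter, ← Finset.sum_filter]
  congr 1
  ext i
  simp only [Finset.mem_filter, Finset.mem_compl, ← mem_and_erase_eq_iff, eq_comm (a := s.1)]

end Sums

theorem extd_eq_wedgeSum (ν : Form n k) : extd n k ν = wedgeSum (fun i p => pderiv i p) ν := rfl

theorem kappaDelta_eq_wedgeSum (ν : Form n k) :
    kappaDelta n k ν = wedgeSum (fun i p => X i * p) ν := rfl

theorem koszul_eq_interiorSum (ν : Form n (k+1)) :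
    koszul n k ν = interiorSum (fun i p => X i * p) ν := rfl

theorem codiff_eq_neg_interiorSum (ν : Form n (k+1)) :
    codiff n k ν = -interiorSum (fun i p => pderiv i p) ν := rfl

theorem codiff_monForm (τ : Finset (Fin n)) (σ : Idx n (k+1)) :
    codiff n k (monForm n (k+1) τ σ)
      = -∑ i ∈ σ.1.attach, sgn σ.1 i.1 •
          (Pi.single (eraseIdx σ i.2) (pderiv i.1 (mon n τ)) : Form n k) := by
  rw [codiff_eq_neg_interiorSum, monForm_eq_single, interiorSum_single (fun i => map_zero _)]
  simp only [sgn_erase_self]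

theorem kappaDelta_monForm_empty (ρ : Idx n k) :
    kappaDelta n k (monForm n k ∅ ρ)
      = ∑ i ∈ (ρ.1ᶜ).attach, sgn (insert i.1 ρ.1) i.1 •
          monForm n (k+1) {i.1} (insertIdx ρ (Finset.mem_compl.mp i.2)) := by
  rw [kappaDelta_eq_wedgeSum, monForm_eq_single, wedgeSum_single (fun i => mul_zero _)]
  simp only [monForm_eq_single, mon, Finset.prod_empty, mul_one, Finset.prod_singleton]

theorem monForm_mem_Qm {τ : Finset (Fin n)} {σ : Idx n k} (h : τ ⊆ σ.1ᶜ) :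
    monForm n k τ σ ∈ Qm n k := by
  refine Submodule.subset_span ⟨τ, σ, ?_, h, rfl⟩
  simpa [Finset.card_compl, σ.2] using Finset.card_le_card h

theorem Pm_le_Qm : Pm n k ≤ Qm n k := by
  refine sup_le (Submodule.span_le.mpr ?_) (Submodule.map_le_iff_le_comap.mpr
    (Submodule.span_le.mpr ?_))
  · rintro _ ⟨σ, rfl⟩
    exact monForm_mem_Qm (Finset.empty_subset _)
  · rintro _ ⟨σ, rfl⟩
    rw [SetLike.mem_coe, Submodule.mem_comap, koszul_eq_interiorSum, monForm_eq_single,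
      interiorSum_single (fun i => mul_zero _)]
    refine Submodule.sum_mem _ fun i _ => Submodule.smul_mem _ _ ?_
    rw [show X i.1 * mon n ∅ = mon n {i.1} by simp [mon], ← monForm_eq_single]
    exact monForm_mem_Qm (by simp)

theorem extd_mem_Qm {ν : Form n k} (hν : ν ∈ Qm n k) : extd n k ν ∈ Qm n (k+1) := by
  suffices Qm n k ≤ (Qm n (k+1)).comap (extd n k) from this hν
  refine Submodule.span_le.mpr ?_
  rintro _ ⟨τ, ρ, -, hτ, rfl⟩
  rw [SetLike.mem_coe, Submodule.mem_comap, monForm_eq_single, extd_eq_wedgeSum,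
    wedgeSum_single (fun i => map_zero _)]
  refine Submodule.sum_mem _ fun i _ => Submodule.smul_mem _ _ ?_
  rw [pderiv_mon]
  split_ifs with hi
  · rw [← monForm_eq_single]
    refine monForm_mem_Qm fun j hj => ?_
    obtain ⟨hji, hjτ⟩ := Finset.mem_erase.mp hj
    simpa [hji] using hτ hjτ
  · rw [Pi.single_zero]
    exact zero_mem _

theorem finner_eq_sum (ω η : Form n k) :
    finner n k ω η = ∑ s, cubeIntegral n (ω s * η s) := rfl

noncomputable def finnerBilin (n k : ℕ) : Form n k →ₗ[ℝ] Form n k →ₗ[ℝ] ℝ :=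
  LinearMap.mk₂ ℝ (finner n k)
    (fun ω ω' η => by simp [finner_eq_sum, add_mul, Finset.sum_add_distrib])
    (fun c ω η => by simp [finner_eq_sum, Finset.mul_sum])
    (fun ω η η' => by simp [finner_eq_sum, mul_add, Finset.sum_add_distrib])
    (fun c ω η => by simp [finner_eq_sum, Finset.mul_sum])

@[simp]
theorem finnerBilin_apply (ω η : Form n k) : finnerBilin n k ω η = finner n k ω η := rfl

theorem finner_single_right (ω : Form n k) (σ : Idx n k) (q : MvPolynomial (Fin n) ℝ) :
    finner n k ω (Pi.single σ q) = cubeIntegral n (ω σ * q) := by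
  rw [finner_eq_sum, Finset.sum_eq_single σ (fun s _ hs => by simp [hs]) (by simp)]
  simp

theorem finner_monForm_eq_zero_of_mem_Qm {ν : Form n k} (hν : ν ∈ Qm n k)
    {τ : Finset (Fin n)} {σ : Idx n k} (hτ : τ ⊆ σ.1) (hne : τ.Nonempty) :
    finner n k ν (monForm n k τ σ) = 0 := by
  suffices Qm n k ≤ LinearMap.ker ((finnerBilin n k).flip (monForm n k τ σ)) from this hν
  refine Submodule.span_le.mpr ?_
  rintro _ ⟨τ', ρ, -, hτ', rfl⟩
  obtain ⟨j, hj⟩ := hne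
  rw [SetLike.mem_coe, LinearMap.mem_ker, LinearMap.flip_apply, finnerBilin_apply,
    monForm_eq_single τ σ, finner_single_right, monForm_apply]
  split_ifs with hσρ
  · subst hσρ
    refine cubeIntegral_mon_mul_mon_of_ne fun heq => ?_
    exact Finset.mem_compl.mp (hτ' (heq ▸ hj)) (hτ hj)
  · rw [zero_mul, map_zero]

/-- By Green's formula this is the boundary term `∫_{∂T} tr ν ∧ tr ⋆μ`. -/
noncomputable def boundaryPairing (n k : ℕ) : Form n k →ₗ[ℝ] Form n (k+1) →ₗ[ℝ] ℝ :=
  (finnerBilin n (k+1)).comp (extd n k) - (finnerBilin n k).compl₂ (codiff n k)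

theorem boundaryPairing_apply (ν : Form n k) (μ : Form n (k+1)) :
    boundaryPairing n k ν μ = finner n (k+1) (extd n k ν) μ - finner n k ν (codiff n k μ) := rfl

theorem boundaryPairing_monForm_eq_zero {ν : Form n k} (hν : ν ∈ Qm n k)
    {τ : Finset (Fin n)} {σ : Idx n (k+1)} (hτ : τ ⊆ σ.1) (hcard : 2 ≤ τ.card) :
    boundaryPairing n k ν (monForm n (k+1) τ σ) = 0 := by
  have hne : τ.Nonempty := Finset.card_pos.mp (by omega)
  rw [boundaryPairing_apply, finner_monForm_eq_zero_of_mem_Qm (extd_mem_Qm hν) hτ hne,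
    codiff_monForm, ← finnerBilin_apply, map_neg, map_sum, zero_sub, neg_neg]
  refine Finset.sum_eq_zero fun i _ => ?_
  rw [map_smul, pderiv_mon]
  split_ifs with hi
  · rw [← monForm_eq_single, finnerBilin_apply,
      finner_monForm_eq_zero_of_mem_Qm hν (Finset.erase_subset_erase i.1 hτ), smul_zero]
    rw [← Finset.card_pos, Finset.card_erase_of_mem hi]
    omega
  · rw [Pi.single_zero, map_zero, smul_zero]

theorem boundaryPairing_monForm_singleton {ν : Form n k} (hν : ν ∈ Qm n k)
    {σ : Idx n (k+1)} {m : Fin n} (hm : m ∈ σ.1) :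
    boundaryPairing n k ν (monForm n (k+1) {m} σ)
      = sgn σ.1 m * finner n k ν (monForm n k ∅ (eraseIdx σ hm)) := by
  rw [boundaryPairing_apply, finner_monForm_eq_zero_of_mem_Qm (extd_mem_Qm hν)
      (Finset.singleton_subset_iff.mpr hm) (Finset.singleton_nonempty m),
    codiff_monForm, ← finnerBilin_apply, map_neg, map_sum, zero_sub, neg_neg,
    Finset.sum_eq_single_of_mem ⟨m, hm⟩ (Finset.mem_attach _ _)]
  · rw [map_smul, pderiv_mon, if_pos (Finset.mem_singleton_self m), Finset.erase_singleton,
      ← monForm_eq_single, smul_eq_mul, finnerBilin_apply]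
  · intro i _ him
    have him' : i.1 ∉ ({m} : Finset (Fin n)) :=
      fun h => him (Subtype.ext (Finset.mem_singleton.mp h))
    rw [map_smul, pderiv_mon, if_neg him', Pi.single_zero, map_zero, smul_zero]

theorem boundaryPairing_kappaDelta {ν : Form n k} (hν : ν ∈ Qm n k) (ρ : Idx n k) :
    boundaryPairing n k ν (kappaDelta n k (monForm n k ∅ ρ))
      = (n - k : ℕ) * finner n k ν (monForm n k ∅ ρ) := by
  have hterm : ∀ i : {i // i ∈ ρ.1ᶜ}, boundaryPairing n k ν
      (sgn (insert i.1 ρ.1) i.1 • monForm n (k+1) {i.1} (insertIdx ρ (Finset.mem_compl.mp i.2)))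
      = finner n k ν (monForm n k ∅ ρ) := by
    intro i
    have hi := Finset.mem_compl.mp i.2
    have hρ : eraseIdx (insertIdx ρ hi) (Finset.mem_insert_self i.1 ρ.1) = ρ :=
      Subtype.ext (Finset.erase_insert hi)
    rw [map_smul, boundaryPairing_monForm_singleton hν (Finset.mem_insert_self i.1 ρ.1), hρ,
      coe_insertIdx, smul_eq_mul, ← mul_assoc, sgn_mul_self, one_mul]
  rw [kappaDelta_monForm_empty, map_sum, Finset.sum_congr rfl fun i _ => hterm i,
    Finset.sum_const, Finset.card_attach, Finset.card_compl, ρ.2, Fintype.card_fin, nsmul_eq_mul]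

theorem Qs_le_PsS_sup_iInf_ker :
    Qs n (k+1) ≤ PsS n k ⊔ ⨅ ν ∈ Qm n k, LinearMap.ker (boundaryPairing n k ν) := by
  refine Submodule.span_le.mpr ?_
  rintro _ ⟨τ, σ, -, hτ, rfl⟩
  simp only [SetLike.mem_coe]
  obtain rfl | ⟨m, rfl⟩ | hcard : τ = ∅ ∨ (∃ m, τ = {m}) ∨ 2 ≤ τ.card := by
    rcases Nat.lt_or_ge τ.card 2 with h | h
    · interval_cases hc : τ.card
      · exact Or.inl (Finset.card_eq_zero.mp hc)
      · exact Or.inr (Or.inl (Finset.card_eq_one.mp hc))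
    · exact Or.inr (Or.inr h)
  · exact Submodule.mem_sup_left (Submodule.mem_sup_left (Submodule.subset_span ⟨σ, rfl⟩))
  · have hm : m ∈ σ.1 := Finset.singleton_subset_iff.mp hτ
    have hnk : ((n - k : ℕ) : ℝ) ≠ 0 := by
      have := Finset.card_le_univ σ.1
      rw [σ.2, Fintype.card_fin] at this
      exact Nat.cast_ne_zero.mpr (by omega)
    set κdx := kappaDelta n k (monForm n k ∅ (eraseIdx σ hm))
    rw [← add_sub_cancel ((sgn σ.1 m / (n - k : ℕ)) • κdx) (monForm n (k+1) {m} σ)]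
    refine Submodule.add_mem_sup (Submodule.mem_sup_right (Submodule.smul_mem _ _
      (Submodule.mem_map_of_mem (Submodule.subset_span ⟨_, rfl⟩)))) ?_
    simp only [Submodule.mem_iInf, LinearMap.mem_ker]
    intro ν hν
    rw [map_sub, map_smul, boundaryPairing_monForm_singleton hν hm, boundaryPairing_kappaDelta hν,
      smul_eq_mul, ← mul_assoc, div_mul_cancel₀ _ hnk, sub_self]
  · refine Submodule.mem_sup_right ?_
    simp only [Submodule.mem_iInf, LinearMap.mem_ker]
    exact fun ν hν => boundaryPairing_monForm_eq_zero hν hτ hcard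

end CubeForms

theorem stmt13_general (n k : ℕ)
    (I : Form n k → Form n k)
    (hI : ∀ ω : Form n k, I ω ∈ Pm n k ∧ ∀ μ ∈ PsS n k,
      finner n (k+1) (extd n k (I ω)) μ - finner n k (I ω) (codiff n k μ)
        = finner n (k+1) (extd n k ω) μ - finner n k ω (codiff n k μ))
    (ω : Form n k) (hω : ω ∈ Qm n k) :
    ∀ μ ∈ Qs n (k+1),
      finner n (k+1) (extd n k (I ω)) μ - finner n k (I ω) (codiff n k μ)
        = finner n (k+1) (extd n k ω) μ - finner n k ω (codiff n k μ) := by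
  intro μ hμ
  have hdiff : I ω - ω ∈ Qm n k := sub_mem (Pm_le_Qm (hI ω).1) hω
  obtain ⟨p, hp, a, ha, rfl⟩ := Submodule.mem_sup.mp (Qs_le_PsS_sup_iInf_ker hμ)
  simp only [Submodule.mem_iInf, LinearMap.mem_ker] at ha
  have hpair : boundaryPairing n k (I ω - ω) (p + a) = 0 := by
    rw [map_add, ha _ hdiff, add_zero, map_sub, LinearMap.sub_apply, sub_eq_zero]
    exact (hI ω).2 p hp
  rwa [map_sub, LinearMap.sub_apply, sub_eq_zero] at hpair

/-- Lemma 3.5, `eq:ap=int`. For `ω ∈ Q_1^-Λ^k` on `T = [-1,1]ⁿ`, the defining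
adjoint identity of the projection `I_T^{d^k}` (tested against `P_1^{*,-}Λ^{k+1}`) extends to all
test forms `μ` in the larger space `Q_1^{*,-}Λ^{k+1}`. -/
theorem stmt13 (n k : ℕ) (hk : k + 1 ≤ n)
    (I : Form n k → Form n k)
    (hI : ∀ ω : Form n k, I ω ∈ Pm n k ∧ ∀ μ ∈ PsS n k,
      finner n (k+1) (extd n k (I ω)) μ - finner n k (I ω) (codiff n k μ)
        = finner n (k+1) (extd n k ω) μ - finner n k ω (codiff n k μ))
    (ω : Form n k) (hω : ω ∈ Qm n k) :
    ∀ μ ∈ Qs n (k+1),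
      finner n (k+1) (extd n k (I ω)) μ - finner n k (I ω) (codiff n k μ)
        = finner n (k+1) (extd n k ω) μ - finner n k ω (codiff n k μ) :=
  stmt13_general n k I hI ω hω
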